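/- arXiv:2509.04919 — 7 statements merged into one kernel-verified Lean document; each statement's English description precedes it below -/
import Mathlib

section
/- For any x1,...,xn and y1,...,yn in [0,1], the empirical covariance c = (1/n)∑xiyi − ((1/n)∑xi)((1/n)∑yi) satisfies −1/4 ≤ c ≤ 1/4. -/
theorem empirical_covariance_bounds (n : ℕ) (hn : 1 ≤ n) (x y : Fin n → ℝ)
    (hx : ∀ i, x i ∈ Set.Icc (0:ℝ) 1) (hy : ∀ i, y i ∈ Set.Icc (0:ℝ) 1) :
    -(1/4) ≤ (∑ i, x i * y i) / n - ((∑ i, x i) / n) * ((∑ i, y i) / n) ∧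
    (∑ i, x i * y i) / n - ((∑ i, x i) / n) * ((∑ i, y i) / n) ≤ 1/4 := by
  have hnpos : (0:ℝ) < n := by exact_mod_cast Nat.lt_of_lt_of_le Nat.zero_lt_one hn
  set a : ℝ := (∑ i, x i) / n with ha
  set b : ℝ := (∑ i, y i) / n with hb
  set S : ℝ := (∑ i, x i * y i) / n with hS
  have hsx0 : (0:ℝ) ≤ ∑ i, x i := Finset.sum_nonneg fun i _ => (hx i).1
  have hsy0 : (0:ℝ) ≤ ∑ i, y i := Finset.sum_nonneg fun i _ => (hy i).1
  have hsx1 : (∑ i, x i) ≤ n := by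
    calc (∑ i, x i) ≤ ∑ _i : Fin n, (1:ℝ) := Finset.sum_le_sum fun i _ => (hx i).2
    _ = n := by simp
  have hsy1 : (∑ i, y i) ≤ n := by
    calc (∑ i, y i) ≤ ∑ _i : Fin n, (1:ℝ) := Finset.sum_le_sum fun i _ => (hy i).2
    _ = n := by simp
  have hS0 : (0:ℝ) ≤ ∑ i, x i * y i :=
    Finset.sum_nonneg fun i _ => mul_nonneg (hx i).1 (hy i).1
  have hSa : (∑ i, x i * y i) ≤ ∑ i, x i := by
    apply Finset.sum_le_sum
    intro i _
    nlinarith [(hx i).1, (hy i).2]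
  have hSb : (∑ i, x i * y i) ≤ ∑ i, y i := by
    apply Finset.sum_le_sum
    intro i _
    nlinarith [(hy i).1, (hx i).2]
  have hlow : (∑ i, x i) + (∑ i, y i) - n ≤ ∑ i, x i * y i := by
    have : ∑ i, (x i + y i - 1) ≤ ∑ i, x i * y i := by
      apply Finset.sum_le_sum
      intro i _
      nlinarith [(hx i).2, (hy i).2]
    simpa [Finset.sum_sub_distrib, Finset.sum_add_distrib] using this
  have h1 : 0 ≤ a := div_nonneg hsx0 hnpos.le
  have h2 : a ≤ 1 := by rw [ha, div_le_one hnpos]; exact hsx1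
  have h3 : 0 ≤ b := div_nonneg hsy0 hnpos.le
  have h4 : b ≤ 1 := by rw [hb, div_le_one hnpos]; exact hsy1
  have h8 : 0 ≤ S := div_nonneg hS0 hnpos.le
  have h5 : S ≤ a := div_le_div_of_nonneg_right hSa hnpos.le |>.trans_eq rfl
  have h6 : S ≤ b := div_le_div_of_nonneg_right hSb hnpos.le |>.trans_eq rfl
  have h7 : a + b - 1 ≤ S := by
    have h := div_le_div_of_nonneg_right hlow hnpos.le
    rw [sub_div, add_div, div_self hnpos.ne'] at h
    rw [ha, hb, hS]
    linarith
  constructor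
  · nlinarith [mul_nonneg h1 h3, mul_nonneg (sub_nonneg.2 h2) (sub_nonneg.2 h4),
      sq_nonneg (a - b), sq_nonneg (a + b - 1), mul_nonneg (sub_nonneg.2 h5) (sub_nonneg.2 h6)]
  · nlinarith [mul_nonneg (sub_nonneg.2 h5) (sub_nonneg.2 h6),
      sq_nonneg (a - b), sq_nonneg (a + b - 1), mul_nonneg h1 (sub_nonneg.2 h4),
      mul_nonneg h3 (sub_nonneg.2 h2)]
end

section
/- Swap-model sensitivity of covariance: if (x,y) and (z,w) with all entries in [0,1]^n agree in all but one index, then |Cov(x,y) − Cov(z,w)| ≤ 1/n, where Cov(x,y) = (1/n)∑xiyi − ((1/n)∑xi)((1/n)∑yi). -/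
set_option maxHeartbeats 1000000

/-- Empirical covariance of a pair of vectors. -/
noncomputable def empCov {n : ℕ} (x y : Fin n → ℝ) : ℝ :=
  (∑ i, x i * y i) / n - ((∑ i, x i) / n) * ((∑ i, y i) / n)

theorem covariance_swap_sensitivity (n : ℕ) (hn : 1 ≤ n) (x y z w : Fin n → ℝ)
    (hx : ∀ i, x i ∈ Set.Icc (0:ℝ) 1) (hy : ∀ i, y i ∈ Set.Icc (0:ℝ) 1)
    (hz : ∀ i, z i ∈ Set.Icc (0:ℝ) 1) (hw : ∀ i, w i ∈ Set.Icc (0:ℝ) 1)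
    (j : Fin n) (hagree : ∀ i, i ≠ j → x i = z i ∧ y i = w i) :
    |empCov x y - empCov z w| ≤ 1 / n := by
  rcases Nat.lt_or_ge n 2 with h2 | h2
  · interval_cases n
    simp only [empCov, Fin.sum_univ_one, Nat.cast_one]
    norm_num
  · -- n ≥ 2
    set s : Finset (Fin n) := Finset.univ.erase j with hs
    set S : ℝ := ∑ i ∈ s, x i with hSdef
    set T : ℝ := ∑ i ∈ s, y i with hTdef
    set P : ℝ := ∑ i ∈ s, x i * y i with hPdef
    have hmem : ∀ i ∈ s, i ≠ j := fun i hi => (Finset.mem_erase.mp hi).1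
    have hSz : (∑ i ∈ s, z i) = S := by
      apply Finset.sum_congr rfl
      intro i hi; exact ((hagree i (hmem i hi)).1).symm
    have hTw : (∑ i ∈ s, w i) = T := by
      apply Finset.sum_congr rfl
      intro i hi; exact ((hagree i (hmem i hi)).2).symm
    have hPzw : (∑ i ∈ s, z i * w i) = P := by
      apply Finset.sum_congr rfl
      intro i hi
      rw [(hagree i (hmem i hi)).1, (hagree i (hmem i hi)).2]
    have hsx : ∑ i, x i = S + x j :=
      (Finset.sum_erase_add Finset.univ x (Finset.mem_univ j)).symm
    have hsy : ∑ i, y i = T + y j :=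
      (Finset.sum_erase_add Finset.univ y (Finset.mem_univ j)).symm
    have hsz : ∑ i, z i = S + z j := by
      rw [← hSz]; exact (Finset.sum_erase_add Finset.univ z (Finset.mem_univ j)).symm
    have hsw : ∑ i, w i = T + w j := by
      rw [← hTw]; exact (Finset.sum_erase_add Finset.univ w (Finset.mem_univ j)).symm
    have hsxy : ∑ i, x i * y i = P + x j * y j :=
      (Finset.sum_erase_add Finset.univ (fun i => x i * y i) (Finset.mem_univ j)).symm
    have hszw : ∑ i, z i * w i = P + z j * w j := by
      rw [← hPzw]
      exact (Finset.sum_erase_add Finset.univ (fun i => z i * w i) (Finset.mem_univ j)).symm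
    have hcard : (s.card : ℝ) = (n : ℝ) - 1 := by
      rw [hs, Finset.card_erase_of_mem (Finset.mem_univ j), Finset.card_univ, Fintype.card_fin]
      rw [Nat.cast_sub hn, Nat.cast_one]
    have hS0 : 0 ≤ S := Finset.sum_nonneg fun i _ => (hx i).1
    have hS1 : S ≤ (n : ℝ) - 1 := by
      calc S ≤ (s.card : ℝ) * 1 := by
              rw [hSdef]
              exact Finset.sum_le_card_nsmul s x 1 (fun i _ => (hx i).2) |>.trans_eq (by simp)
        _ = (n : ℝ) - 1 := by rw [hcard, mul_one]
    have hT0 : 0 ≤ T := Finset.sum_nonneg fun i _ => (hy i).1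
    have hT1 : T ≤ (n : ℝ) - 1 := by
      calc T ≤ (s.card : ℝ) * 1 := by
              rw [hTdef]
              exact Finset.sum_le_card_nsmul s y 1 (fun i _ => (hy i).2) |>.trans_eq (by simp)
        _ = (n : ℝ) - 1 := by rw [hcard, mul_one]
    have hN : (2 : ℝ) ≤ (n : ℝ) := by exact_mod_cast h2
    have hNpos : (0 : ℝ) < (n : ℝ) := by linarith
    set N : ℝ := (n : ℝ)
    set a := x j; set b := y j; set a' := z j; set b' := w j
    have ha0 : (0:ℝ) ≤ a := (hx j).1
    have ha1 : a ≤ 1 := (hx j).2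
    have hb0 : (0:ℝ) ≤ b := (hy j).1
    have hb1 : b ≤ 1 := (hy j).2
    have ha'0 : (0:ℝ) ≤ a' := (hz j).1
    have ha'1 : a' ≤ 1 := (hz j).2
    have hb'0 : (0:ℝ) ≤ b' := (hw j).1
    have hb'1 : b' ≤ 1 := (hw j).2
    have key : empCov x y - empCov z w =
        ((a * b - a' * b') * (N - 1) - S * (b - b') - T * (a - a')) / N ^ 2 := by
      simp only [empCov, hsx, hsy, hsz, hsw, hsxy, hszw]
      field_simp
      ring
    rw [key]
    clear_value S T P N a b a' b'
    set m : ℝ := N - 1 with hm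
    have hm1 : (1 : ℝ) ≤ m := by simp only [hm]; linarith
    have hm0 : (0 : ℝ) < m := by linarith
    set E : ℝ := (a * b - a' * b') * m - S * (b - b') - T * (a - a') with hE
    have hub : E ≤ m := by
      have h : m * E ≤ m * m := by
        nlinarith [mul_nonneg (mul_nonneg (by linarith : (0:ℝ) ≤ m - S) (by linarith : (0:ℝ) ≤ m - T)) (by nlinarith : (0:ℝ) ≤ 1 - (a*b - a'*b')),
          mul_nonneg (mul_nonneg (by linarith : (0:ℝ) ≤ m - S) hT0) (by nlinarith : (0:ℝ) ≤ 1 - (a*b - a'*b' - (a - a'))),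
          mul_nonneg (mul_nonneg hS0 (by linarith : (0:ℝ) ≤ m - T)) (by nlinarith : (0:ℝ) ≤ 1 - (a*b - a'*b' - (b - b'))),
          mul_nonneg (mul_nonneg hS0 hT0) (by nlinarith : (0:ℝ) ≤ 1 - (a*b - a'*b' - (b - b') - (a - a')))]
      exact le_of_mul_le_mul_left h hm0
    have hlb : -m ≤ E := by
      have h : m * (-m) ≤ m * E := by
        nlinarith [mul_nonneg (mul_nonneg (by linarith : (0:ℝ) ≤ m - S) (by linarith : (0:ℝ) ≤ m - T)) (by nlinarith : (0:ℝ) ≤ (a*b - a'*b') + 1),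
          mul_nonneg (mul_nonneg (by linarith : (0:ℝ) ≤ m - S) hT0) (by nlinarith : (0:ℝ) ≤ (a*b - a'*b' - (a - a')) + 1),
          mul_nonneg (mul_nonneg hS0 (by linarith : (0:ℝ) ≤ m - T)) (by nlinarith : (0:ℝ) ≤ (a*b - a'*b' - (b - b')) + 1),
          mul_nonneg (mul_nonneg hS0 hT0) (by nlinarith : (0:ℝ) ≤ (a*b - a'*b' - (b - b') - (a - a')) + 1)]
      exact le_of_mul_le_mul_left h hm0
    rw [abs_div, abs_of_pos (by positivity : (0:ℝ) < N ^ 2), div_le_div_iff₀ (by positivity) hNpos]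
    have habs : |E| ≤ m := abs_le.mpr ⟨hlb, hub⟩
    calc |E| * N ≤ m * N := mul_le_mul_of_nonneg_right habs (le_of_lt hNpos)
      _ ≤ 1 * N ^ 2 := by nlinarith
end

section
/- Let C(r_x, r_y, c) = (1−2r_x+2r_x²)(1−2r_y+2r_y²) − 2c(1−2r_x)(1−2r_y) + 4c². Then for all r_x, r_y ∈ [0,1] and all c with max(0, r_x+r_y−1) − r_x·r_y ≤ c ≤ min(r_x, r_y) − r_x·r_y, one has C(r_x, r_y, c) ≤ 1. -/
set_option maxHeartbeats 1000000 in
lemma cov_aux (u v t : ℝ) (hu : u^2 ≤ 1) (hv : v^2 ≤ 1)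
    (hL1 : -1 + (u+v) - 2*u*v ≤ t) (hL2 : -1 - (u+v) - 2*u*v ≤ t)
    (hU1 : t ≤ 1 + (v-u) - 2*u*v) (hU2 : t ≤ 1 + (u-v) - 2*u*v) :
    t^2 + u^2 + v^2 ≤ 3 := by
  have hum : -1 ≤ u := by nlinarith [sq_nonneg (u+1)]
  have huM : u ≤ 1 := by nlinarith [sq_nonneg (u-1)]
  have hvm : -1 ≤ v := by nlinarith [sq_nonneg (v+1)]
  have hvM : v ≤ 1 := by nlinarith [sq_nonneg (v-1)]
  rcases le_total 0 t with ht | ht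
  · rcases le_total u v with h | h
    · -- binding U = 1 + u - v - 2uv, q = v - u + u*v
      have hq0 : 0 ≤ v - u + u*v := by nlinarith [mul_nonneg (sub_nonneg.2 h) (by linarith : (0:ℝ) ≤ 1+u), sq_nonneg u]
      have hq1 : v - u + u*v ≤ 1 := by nlinarith [mul_nonneg (by linarith : (0:ℝ) ≤ 1+u) (by linarith : (0:ℝ) ≤ 1-v)]
      nlinarith [mul_nonneg (sub_nonneg.2 hU2) ht,
        mul_nonneg (sub_nonneg.2 hU2) (le_trans ht hU2),
        mul_nonneg hq0 (sub_nonneg.2 hq1),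
        mul_nonneg (by nlinarith : (0:ℝ) ≤ 1 - u^2) (sq_nonneg v)]
    · have hq0 : 0 ≤ u - v + u*v := by nlinarith [mul_nonneg (sub_nonneg.2 h) (by linarith : (0:ℝ) ≤ 1+v), sq_nonneg v]
      have hq1 : u - v + u*v ≤ 1 := by nlinarith [mul_nonneg (by linarith : (0:ℝ) ≤ 1+v) (by linarith : (0:ℝ) ≤ 1-u)]
      nlinarith [mul_nonneg (sub_nonneg.2 hU1) ht,
        mul_nonneg (sub_nonneg.2 hU1) (le_trans ht hU1),
        mul_nonneg hq0 (sub_nonneg.2 hq1),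
        mul_nonneg (by nlinarith : (0:ℝ) ≤ 1 - v^2) (sq_nonneg u)]
  · rcases le_total 0 (u+v) with h | h
    · -- binding L = -1 + (u+v) - 2uv, q = (u+v) - u*v
      have hq0 : 0 ≤ (u+v) - u*v := by nlinarith [mul_nonneg h (by linarith : (0:ℝ) ≤ 1-u), sq_nonneg u]
      have hq1 : (u+v) - u*v ≤ 1 := by nlinarith [mul_nonneg (by linarith : (0:ℝ) ≤ 1-u) (by linarith : (0:ℝ) ≤ 1-v)]
      nlinarith [mul_nonneg (sub_nonneg.2 hL1) (neg_nonneg.2 ht),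
        mul_nonneg (sub_nonneg.2 hL1) (neg_nonneg.2 (le_trans hL1 ht)),
        mul_nonneg hq0 (sub_nonneg.2 hq1),
        mul_nonneg (by nlinarith : (0:ℝ) ≤ 1 - u^2) (sq_nonneg v)]
    · have hq0 : 0 ≤ -(u+v) - u*v := by nlinarith [mul_nonneg (neg_nonneg.2 h) (by linarith : (0:ℝ) ≤ 1+u), sq_nonneg u]
      have hq1 : -(u+v) - u*v ≤ 1 := by nlinarith [mul_nonneg (by linarith : (0:ℝ) ≤ 1+u) (by linarith : (0:ℝ) ≤ 1+v)]
      have A := mul_nonneg (sub_nonneg.2 hL2) (neg_nonneg.2 ht)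
      have B := mul_nonneg (sub_nonneg.2 hL2) (neg_nonneg.2 (le_trans hL2 ht))
      have C := mul_nonneg hq0 (sub_nonneg.2 hq1)
      have D := mul_nonneg (by nlinarith : (0:ℝ) ≤ 1 - u^2) (sq_nonneg v)
      ring_nf at A B C D ⊢
      linarith [A, B, C, D, hv]

theorem covariance_constant_le_one (rx ry c : ℝ)
    (hrx : rx ∈ Set.Icc (0:ℝ) 1) (hry : ry ∈ Set.Icc (0:ℝ) 1)
    (hc1 : max 0 (rx + ry - 1) - rx * ry ≤ c)
    (hc2 : c ≤ min rx ry - rx * ry) :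
    (1 - 2*rx + 2*rx^2) * (1 - 2*ry + 2*ry^2)
      - 2*c*(1 - 2*rx)*(1 - 2*ry) + 4*c^2 ≤ 1 := by
  obtain ⟨hx0, hx1⟩ := hrx
  obtain ⟨hy0, hy1⟩ := hry
  have h1 : 0 - rx * ry ≤ c := le_trans (by gcongr; exact le_max_left _ _) hc1
  have h2 : (rx + ry - 1) - rx * ry ≤ c :=
    le_trans (by gcongr; exact le_max_right _ _) hc1
  have h3 : c ≤ rx - rx * ry := le_trans hc2 (by gcongr; exact min_le_left _ _)
  have h4 : c ≤ ry - rx * ry := le_trans hc2 (by gcongr; exact min_le_right _ _)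
  have key := cov_aux (1-2*rx) (1-2*ry) (4*c - (1-2*rx)*(1-2*ry))
    (by nlinarith) (by nlinarith) (by nlinarith) (by nlinarith) (by nlinarith) (by nlinarith)
  nlinarith [key]
end

section
/- Let C_b(r, v) = 3v² − 2(3r² − 3r + 1)v + 3r⁴ − 6r³ + 7r² − 4r + 1 and C_c(r, v) = (1−2r+2r²)² − 2v(1−2r)² + 4v². Then for all r ∈ [0,1] and v ∈ [0, r − r²], C_b(r, v) ≤ C_c(r, v); explicitly, C_c(r,v) − C_b(r,v) = (v − (r² − r))². -/
theorem Cb_le_Cc (r v : ℝ) (hr : r ∈ Set.Icc (0:ℝ) 1)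
    (hv : v ∈ Set.Icc (0:ℝ) (r - r^2)) :
    ((1 - 2*r + 2*r^2)^2 - 2*v*(1 - 2*r)^2 + 4*v^2)
      - (3*v^2 - 2*(3*r^2 - 3*r + 1)*v + 3*r^4 - 6*r^3 + 7*r^2 - 4*r + 1)
      = (v - (r^2 - r))^2 ∧
    3*v^2 - 2*(3*r^2 - 3*r + 1)*v + 3*r^4 - 6*r^3 + 7*r^2 - 4*r + 1
      ≤ (1 - 2*r + 2*r^2)^2 - 2*v*(1 - 2*r)^2 + 4*v^2 := by
  constructor
  · ring
  · nlinarith [sq_nonneg (v - (r^2 - r))]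
end

section
/- Let C_c(r, v) = (1−2r+2r²)² − 2v(1−2r)² + 4v² and C_u(r, v) = v² + (1−v)². Then for all r ∈ [0,1] and v ∈ [0, r − r²], C_c(r, v) ≤ C_u(r, v). -/
theorem Cc_le_Cu (r v : ℝ) (hr : r ∈ Set.Icc (0:ℝ) 1)
    (hv : v ∈ Set.Icc (0:ℝ) (r - r^2)) :
    (1 - 2*r + 2*r^2)^2 - 2*v*(1 - 2*r)^2 + 4*v^2 ≤ v^2 + (1 - v)^2 := by
  obtain ⟨hr0, hr1⟩ := hr
  obtain ⟨hv0, hv1⟩ := hv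
  nlinarith [sq_nonneg (r - r^2 - v), sq_nonneg v, mul_nonneg hv0 hv0,
    mul_nonneg (mul_nonneg hr0 (sub_nonneg.2 hr1)) hv0,
    sq_nonneg (r*(1-r)), mul_nonneg hr0 (sub_nonneg.2 hr1),
    mul_nonneg (sub_nonneg.2 hv1) hv0]
end

section
/- Let C_b(r, v) = 3v² − 2(3r²−3r+1)v + 3r⁴ − 6r³ + 7r² − 4r + 1. Then for all r ∈ [0,1] and v ∈ [0, r − r²], C_b(r, v) ≤ 1. -/
theorem Cb_le_one (r v : ℝ) (hr : r ∈ Set.Icc (0:ℝ) 1)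
    (hv : v ∈ Set.Icc (0:ℝ) (r - r^2)) :
    3*v^2 - 2*(3*r^2 - 3*r + 1)*v + 3*r^4 - 6*r^3 + 7*r^2 - 4*r + 1 ≤ 1 := by
  obtain ⟨hr0, hr1⟩ := hr
  obtain ⟨hv0, hv1⟩ := hv
  nlinarith [sq_nonneg v, sq_nonneg (r - r^2 - v), mul_nonneg hv0 (sub_nonneg.2 hr1), mul_nonneg (mul_nonneg hr0 hr0) (sub_nonneg.2 hr1), sq_nonneg (r*(1-r)), mul_nonneg hv0 hr0, mul_nonneg (sub_nonneg.2 hv1) hr0, mul_nonneg (sub_nonneg.2 hv1) (sub_nonneg.2 hr1)]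
end

section
/- Approximation of the sum by rescaled variance under zero-padding: for x ∈ [0,1]^m, let D_k be the vector of length m+k consisting of √x_1,...,√x_m followed by k zeros, and let Var denote the empirical variance. Then |k·Var(D_k) − ∑_{i=1}^m x_i| ≤ 2m²/k. -/
/-!
Write `S = ∑ xᵢ`, `T = ∑ √xᵢ` and `n = m + k`. Padding with zeros changes neither sum, so
`Var(D_k) = S / n - (T / n)²` and `k Var(D_k) - S = -(m S / n + k T² / n²)`. Since `S, T ≤ m`,
both terms are at most `m² / k`.
-/

/-- Empirical (biased) variance of a vector. -/
noncomputable def empVar {n : ℕ} (y : Fin n → ℝ) : ℝ :=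
  (∑ i, (y i)^2) / n - ((∑ i, y i) / n)^2

lemma empVar_append_zero {m k : ℕ} (y : Fin m → ℝ) :
    empVar (Fin.append y (fun _ : Fin k => 0)) =
      (∑ i, y i ^ 2) / (m + k) - ((∑ i, y i) / (m + k)) ^ 2 := by
  simp [empVar, Fin.sum_univ_add]

lemma abs_mul_padded_variance_sub_le {m k S T : ℝ} (hm : 0 ≤ m) (hk : 0 < k)
    (hS₀ : 0 ≤ S) (hS : S ≤ m) (hT₀ : 0 ≤ T) (hT : T ≤ m) :
    |k * (S / (m + k) - (T / (m + k)) ^ 2) - S| ≤ 2 * m ^ 2 / k := by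
  have hn : 0 < m + k := by positivity
  have hdefect : k * (S / (m + k) - (T / (m + k)) ^ 2) - S
      = -(m * S / (m + k) + k * T ^ 2 / (m + k) ^ 2) := by
    field_simp
    ring
  have hfirst : m * S / (m + k) ≤ m ^ 2 / k := by
    rw [div_le_div_iff₀ hn hk]
    nlinarith [mul_le_mul_of_nonneg_left hS hm, mul_nonneg hm hS₀]
  have hsecond : k * T ^ 2 / (m + k) ^ 2 ≤ m ^ 2 / k := by
    rw [div_le_div_iff₀ (by positivity) hk]
    have hT2 : T ^ 2 ≤ m ^ 2 := pow_le_pow_left₀ hT₀ hT 2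
    have hk2 : k ^ 2 ≤ (m + k) ^ 2 := pow_le_pow_left₀ hk.le (by linarith) 2
    nlinarith [mul_le_mul hT2 hk2 (sq_nonneg k) (sq_nonneg m)]
  rw [hdefect, abs_neg, abs_of_nonneg (by positivity), two_mul, add_div]
  exact add_le_add hfirst hsecond

theorem sum_approx_by_rescaled_variance_general (m k : ℕ) (hk : 1 ≤ k)
    (x : Fin m → ℝ) (hx : ∀ i, x i ∈ Set.Icc (0:ℝ) 1) :
    |(k : ℝ) * empVar (Fin.append (fun i => Real.sqrt (x i)) (fun _ : Fin k => 0))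
        - ∑ i, x i| ≤ 2 * m^2 / k := by
  have hsq : ∑ i, Real.sqrt (x i) ^ 2 = ∑ i, x i :=
    Finset.sum_congr rfl fun i _ => Real.sq_sqrt (hx i).1
  have hS : ∑ i, x i ≤ m := by
    simpa using Finset.sum_le_card_nsmul Finset.univ x 1 fun i _ => (hx i).2
  have hT : ∑ i, Real.sqrt (x i) ≤ m := by
    simpa using Finset.sum_le_card_nsmul Finset.univ _ 1
      fun i _ => Real.sqrt_le_one.2 (hx i).2
  rw [empVar_append_zero, hsq]
  exact abs_mul_padded_variance_sub_le (Nat.cast_nonneg m) (by exact_mod_cast hk)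
    (Finset.sum_nonneg fun i _ => (hx i).1) hS
    (Finset.sum_nonneg fun i _ => Real.sqrt_nonneg _) hT

theorem sum_approx_by_rescaled_variance (m k : ℕ) (hm : 1 ≤ m) (hk : 1 ≤ k)
    (x : Fin m → ℝ) (hx : ∀ i, x i ∈ Set.Icc (0:ℝ) 1) :
    |(k : ℝ) * empVar (Fin.append (fun i => Real.sqrt (x i)) (fun _ : Fin k => 0))
        - ∑ i, x i| ≤ 2 * m^2 / k :=
  sum_approx_by_rescaled_variance_general m k hk x hx
end
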